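/- arXiv:2304.04593 — 4 statements merged into one kernel-verified Lean document; each statement's English description precedes it below -/
import Mathlib

section
/- Let 𝒜 ∈ Sp(2d,ℝ) with submatrices E_𝒜, F_𝒜, ℰ_𝒜, ℱ_𝒜. If E_𝒜 is invertible, then ℱ_𝒜 = E_𝒜^{−T} F_𝒜ᵀ ℰ_𝒜 (where E_𝒜^{−T} denotes the inverse transpose of E_𝒜). -/
open Matrix

def Jmat (n : Type*) [DecidableEq n] [Fintype n] : Matrix (n ⊕ n) (n ⊕ n) ℝ :=
  Matrix.fromBlocks 0 1 (-1) 0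

def IsSymplectic {n : Type*} [DecidableEq n] [Fintype n]
    (S : Matrix (n ⊕ n) (n ⊕ n) ℝ) : Prop :=
  Sᵀ * Jmat n * S = Jmat n

def quad {d : ℕ} (A11 A12 A13 A14 A21 A22 A23 A24 A31 A32 A33 A34 A41 A42 A43 A44 :
    Matrix (Fin d) (Fin d) ℝ) :
    Matrix ((Fin d ⊕ Fin d) ⊕ (Fin d ⊕ Fin d)) ((Fin d ⊕ Fin d) ⊕ (Fin d ⊕ Fin d)) ℝ :=
  Matrix.fromBlocks (Matrix.fromBlocks A11 A12 A21 A22) (Matrix.fromBlocks A13 A14 A23 A24)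
    (Matrix.fromBlocks A31 A32 A41 A42) (Matrix.fromBlocks A33 A34 A43 A44)

def Lmat {d : ℕ} : Matrix (Fin d ⊕ Fin d) (Fin d ⊕ Fin d) ℝ := Matrix.fromBlocks 0 1 1 0

def Pmat {d : ℕ} : Matrix (Fin d ⊕ Fin d) (Fin d ⊕ Fin d) ℝ := Matrix.fromBlocks 0 1 0 0

def Qmat {d : ℕ} : Matrix (Fin d ⊕ Fin d) (Fin d ⊕ Fin d) ℝ := Matrix.fromBlocks 1 0 0 (-1)

/-! The columns of `𝒜` with indices in blocks 1, 3 and those in blocks 2, 4 are images of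
symplectically orthogonal coordinate subspaces, so the corresponding block of `𝒜ᵀ J 𝒜 = J`
vanishes; written out in the row blocks, it says `E_𝒜ᵀ ℱ_𝒜 = F_𝒜ᵀ ℰ_𝒜`. -/

section Symplectic

variable {m n p ι : Type*} [DecidableEq m] [Fintype m]

theorem transpose_mul_Jmat_mul (S : Matrix (m ⊕ m) n ℝ) (T : Matrix (m ⊕ m) p ℝ) :
    Sᵀ * Jmat m * T = S.toRows₁ᵀ * T.toRows₂ - S.toRows₂ᵀ * T.toRows₁ := by
  conv_lhs => rw [← fromRows_toRows S, ← fromRows_toRows T]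
  rw [Jmat, transpose_fromRows, fromCols_mul_fromBlocks, fromCols_mul_fromRows]
  simp only [Matrix.mul_zero, Matrix.mul_one, Matrix.mul_neg, Matrix.neg_mul, zero_add, add_zero]
  abel

theorem IsSymplectic.transpose_mul_eq_of_submatrix_Jmat_eq_zero {S : Matrix (m ⊕ m) (m ⊕ m) ℝ}
    (hS : IsSymplectic S) {c₁ c₂ : ι → m ⊕ m} (hc : (Jmat m).submatrix c₁ c₂ = 0) :
    (S.submatrix Sum.inl c₁)ᵀ * S.submatrix Sum.inr c₂ =
      (S.submatrix Sum.inr c₁)ᵀ * S.submatrix Sum.inl c₂ := by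
  have h := congrArg (·.submatrix c₁ c₂) hS
  simp only [hc, submatrix_mul _ _ _ id _ Function.bijective_id, ← transpose_submatrix,
    submatrix_id_id] at h
  rw [transpose_mul_Jmat_mul, sub_eq_zero] at h
  exact h

end Symplectic

theorem Jmat_sum_submatrix_sumMap_inl_sumMap_inr (n₁ n₂ : Type*) [DecidableEq n₁] [Fintype n₁]
    [DecidableEq n₂] [Fintype n₂] :
    (Jmat (n₁ ⊕ n₂)).submatrix (Sum.map Sum.inl Sum.inl) (Sum.map Sum.inr Sum.inr) = 0 := by
  ext (i | i) (j | j) <;> simp [Jmat]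

/-- if E_𝒜 is invertible then ℱ_𝒜 = E_𝒜^{−T} F_𝒜ᵀ ℰ_𝒜. -/
theorem stmt2 {d : ℕ}
    (A11 A12 A13 A14 A21 A22 A23 A24 A31 A32 A33 A34 A41 A42 A43 A44 :
      Matrix (Fin d) (Fin d) ℝ)
    (h : IsSymplectic
      (quad A11 A12 A13 A14 A21 A22 A23 A24 A31 A32 A33 A34 A41 A42 A43 A44))
    (hE : IsUnit (Matrix.fromBlocks A11 A13 A21 A23).det) :
    Matrix.fromBlocks A32 A34 A42 A44 =
      ((Matrix.fromBlocks A11 A13 A21 A23)ᵀ)⁻¹ *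
        (Matrix.fromBlocks A31 A33 A41 A43)ᵀ * Matrix.fromBlocks A12 A14 A22 A24 := by
  have key : (fromBlocks A11 A13 A21 A23)ᵀ * fromBlocks A32 A34 A42 A44 =
      (fromBlocks A31 A33 A41 A43)ᵀ * fromBlocks A12 A14 A22 A24 := by
    -- `E_𝒜, F_𝒜` (resp. `ℰ_𝒜, ℱ_𝒜`) are the row halves of the column blocks `Sum.map inl inl`
    -- (resp. `Sum.map inr inr`) of `𝒜`
    convert h.transpose_mul_eq_of_submatrix_Jmat_eq_zero
      (Jmat_sum_submatrix_sumMap_inl_sumMap_inr (Fin d) (Fin d)) using 2 <;>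
      ext (i | i) (j | j) <;> rfl
  rw [Matrix.mul_assoc, ← key, nonsing_inv_mul_cancel_left _ _ (by rwa [det_transpose])]
end

section
/- Let 𝒜 ∈ Sp(2d,ℝ) with submatrices E_𝒜, F_𝒜, ℰ_𝒜, ℱ_𝒜, and let L = [[0, I_d], [I_d, 0]]. If ℰ_𝒜 is invertible, then: (i) F_𝒜 = ℰ_𝒜^{−T} ℱ_𝒜ᵀ E_𝒜; (ii) the matrix 𝔊_𝒜 := L ℰ_𝒜^{−1} E_𝒜 belongs to Sp(d,ℝ); (iii) E_𝒜 is invertible and det(E_𝒜) = (−1)^d det(ℰ_𝒜). In particular, E_𝒜 is invertible if and only if ℰ_𝒜 is invertible. -/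
/-!
Reordering the columns of `𝒜` from `(x₁, x₂, ξ₁, ξ₂)` to `(x₁, ξ₁, x₂, ξ₂)` turns it into
`M = [[E, ℰ], [F, ℱ]]`, and `𝒜ᵀ J 𝒜 = J` becomes `Mᵀ J M = J ⊕ J`, hence also `M (J ⊕ J) Mᵀ = J`.
The `(2,1)` block of the first identity, `ℰᵀ F = ℱᵀ E`, is (i). Substituting (i) into the
`(1,1)` block `Eᵀ F - Fᵀ E = J` and using the `(2,2)` block `ℰᵀ ℱ - ℱᵀ ℰ = J` gives
`Hᵀ J H = -J` for `H = ℰ⁻¹ E`; as `Lᵀ J L = -J`, the matrix `L H` is symplectic, which is (ii).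
Symplectic matrices have determinant `1` and `det L = (-1)^d`, which gives (iii). The `(1,1)`
block of the second identity, `E J Eᵀ = -ℰ J ℰᵀ`, gives `(det E)² = (det ℰ)²`, hence the
final equivalence.
-/

open Matrix

section Jmat

variable {n : Type*} [DecidableEq n] [Fintype n]

theorem Jmat_eq_neg_J : Jmat n = -J n ℝ := by
  simp [Jmat, J, fromBlocks_neg]

theorem isSymplectic_iff_mem_symplecticGroup {S : Matrix (n ⊕ n) (n ⊕ n) ℝ} :
    IsSymplectic S ↔ S ∈ symplecticGroup n ℝ := by
  rw [SymplecticGroup.mem_iff', IsSymplectic, Jmat_eq_neg_J, mul_neg, neg_mul, neg_inj]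

theorem IsSymplectic.det_eq_one {S : Matrix (n ⊕ n) (n ⊕ n) ℝ} (h : IsSymplectic S) :
    S.det = 1 :=
  SymplecticGroup.det_eq_one (isSymplectic_iff_mem_symplecticGroup.1 h)

theorem isSymplectic_Jmat : IsSymplectic (Jmat n) := by
  rw [isSymplectic_iff_mem_symplecticGroup, Jmat_eq_neg_J]
  exact SymplecticGroup.neg_mem (SymplecticGroup.J_mem n ℝ)

theorem det_Jmat : (Jmat n).det = 1 :=
  isSymplectic_Jmat.det_eq_one

theorem Jmat_mul_Jmat : Jmat n * Jmat n = -1 := by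
  rw [Jmat_eq_neg_J, neg_mul_neg, J_squared]

theorem transpose_mul_Jmat_mul_fromBlocks {k l : Type*} (A : Matrix n k ℝ) (B : Matrix n l ℝ)
    (C : Matrix n k ℝ) (D : Matrix n l ℝ) :
    (fromBlocks A B C D)ᵀ * Jmat n * fromBlocks A B C D =
      fromBlocks (Aᵀ * C - Cᵀ * A) (Aᵀ * D - Cᵀ * B) (Bᵀ * C - Dᵀ * A) (Bᵀ * D - Dᵀ * B) := by
  simp only [Jmat, fromBlocks_transpose, fromBlocks_multiply]
  simp [sub_eq_add_neg, add_comm]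

end Jmat

theorem mul_mul_transpose_eq_of_transpose_mul_mul_eq {R n : Type*} [CommRing R] [Fintype n]
    [DecidableEq n] {M J K : Matrix n n R} (hJ : J * J = -1) (hK : K * K = -1)
    (h : Mᵀ * J * M = K) : M * K * Mᵀ = J := by
  have hinv : Mᵀ * -(J * M * K) = 1 := by
    rw [mul_neg, ← mul_assoc, ← mul_assoc, h, hK, neg_neg]
  have hinv' := mul_eq_one_comm.1 hinv
  calc M * K * Mᵀ = -(J * J) * (M * K * Mᵀ) := by rw [hJ, neg_neg, one_mul]
    _ = J * (-(J * M * K) * Mᵀ) := by noncomm_ring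
    _ = J := by rw [hinv', mul_one]

section Reordering

variable {m : Type*}

local notation "σ" => Equiv.sumSumSumComm m m m m

theorem quad_eq_submatrix {d : ℕ}
    (A11 A12 A13 A14 A21 A22 A23 A24 A31 A32 A33 A34 A41 A42 A43 A44 :
      Matrix (Fin d) (Fin d) ℝ) :
    quad A11 A12 A13 A14 A21 A22 A23 A24 A31 A32 A33 A34 A41 A42 A43 A44 =
      (fromBlocks (fromBlocks A11 A13 A21 A23) (fromBlocks A12 A14 A22 A24)
        (fromBlocks A31 A33 A41 A43) (fromBlocks A32 A34 A42 A44)).submatrix id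
        (Equiv.sumSumSumComm _ _ _ _) := by
  ext (i | i) (j | j) <;> rcases i with i | i <;> rcases j with j | j <;> rfl

theorem sumSumSumComm_comp_self : ⇑σ ∘ ⇑σ = id := by
  funext x
  rcases x with (x | x) | (x | x) <;> rfl

variable [DecidableEq m] [Fintype m]

theorem Jmat_submatrix_sumSumSumComm :
    (Jmat (m ⊕ m)).submatrix σ σ = fromBlocks (Jmat m) 0 0 (Jmat m) := by
  ext (i | i) (j | j) <;> rcases i with i | i <;> rcases j with j | j <;>
    simp [Jmat, one_apply]

theorem isSymplectic_submatrix_sumSumSumComm_iff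
    {M : Matrix ((m ⊕ m) ⊕ (m ⊕ m)) ((m ⊕ m) ⊕ (m ⊕ m)) ℝ} :
    IsSymplectic (M.submatrix id σ) ↔
      Mᵀ * Jmat (m ⊕ m) * M = fromBlocks (Jmat m) 0 0 (Jmat m) := by
  have hconj : (M.submatrix id σ)ᵀ * Jmat (m ⊕ m) * M.submatrix id σ =
      (Mᵀ * Jmat (m ⊕ m) * M).submatrix σ σ := by
    change Mᵀ.submatrix σ (Equiv.refl _) * (Jmat _).submatrix (Equiv.refl _) (Equiv.refl _) *
      M.submatrix (Equiv.refl _) σ = _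
    rw [submatrix_mul_equiv, submatrix_mul_equiv]
  rw [IsSymplectic, hconj, ← Jmat_submatrix_sumSumSumComm]
  constructor <;> intro h
  · simpa only [submatrix_submatrix, sumSumSumComm_comp_self, submatrix_id_id] using
      congrArg (·.submatrix σ σ) h
  · rw [h, submatrix_submatrix, sumSumSumComm_comp_self, submatrix_id_id]

end Reordering

section Blocks

variable {m : Type*} [DecidableEq m] [Fintype m] {E ℰ F ℱ : Matrix (m ⊕ m) (m ⊕ m) ℝ}

theorem add_mul_Jmat_mul_transpose_eq_zero
    (h : (fromBlocks E ℰ F ℱ)ᵀ * Jmat (m ⊕ m) * fromBlocks E ℰ F ℱ =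
      fromBlocks (Jmat m) 0 0 (Jmat m)) :
    E * Jmat m * Eᵀ + ℰ * Jmat m * ℰᵀ = 0 := by
  have hK : fromBlocks (Jmat m) 0 0 (Jmat m) * fromBlocks (Jmat m) 0 0 (Jmat m) = -1 := by
    simp [fromBlocks_multiply, Jmat_mul_Jmat, ← fromBlocks_one, fromBlocks_neg]
  have hrow := congrArg toBlocks₁₁
    (mul_mul_transpose_eq_of_transpose_mul_mul_eq Jmat_mul_Jmat hK h)
  simpa [fromBlocks_transpose, fromBlocks_multiply, Jmat] using hrow

theorem det_mul_self_eq_det_mul_self (h : E * Jmat m * Eᵀ + ℰ * Jmat m * ℰᵀ = 0) :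
    E.det * E.det = ℰ.det * ℰ.det := by
  have hdet := congrArg det (eq_neg_of_add_eq_zero_left h)
  simp only [det_mul, det_transpose, det_neg, det_Jmat, Fintype.card_sum,
    Even.neg_one_pow ⟨_, rfl⟩] at hdet
  linear_combination hdet

theorem transpose_mul_Jmat_mul_inv_mul_eq_neg (hℰ : IsUnit ℰ.det)
    (hF : F = ℰᵀ⁻¹ * ℱᵀ * E) (h₁₁ : Eᵀ * F - Fᵀ * E = Jmat m)
    (h₂₂ : ℰᵀ * ℱ - ℱᵀ * ℰ = Jmat m) :
    (ℰ⁻¹ * E)ᵀ * Jmat m * (ℰ⁻¹ * E) = -Jmat m := by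
  have hℰT : IsUnit ℰᵀ.det := by rwa [det_transpose]
  calc (ℰ⁻¹ * E)ᵀ * Jmat m * (ℰ⁻¹ * E)
      = Eᵀ * ℰᵀ⁻¹ * (ℰᵀ * ℱ - ℱᵀ * ℰ) * (ℰ⁻¹ * E) := by
        rw [← h₂₂, transpose_mul, transpose_nonsing_inv]
    _ = Eᵀ * (ℰᵀ⁻¹ * ℰᵀ) * ℱ * ℰ⁻¹ * E - Eᵀ * ℰᵀ⁻¹ * ℱᵀ * (ℰ * ℰ⁻¹) * E := by noncomm_ring
    _ = Eᵀ * ℱ * ℰ⁻¹ * E - Eᵀ * (ℰᵀ⁻¹ * ℱᵀ * E) := by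
        rw [nonsing_inv_mul _ hℰT, mul_nonsing_inv _ hℰ]; noncomm_ring
    _ = Fᵀ * E - Eᵀ * F := by
        rw [hF, transpose_mul, transpose_mul, transpose_nonsing_inv, transpose_transpose,
          transpose_transpose, mul_assoc Eᵀ]
    _ = -Jmat m := by rw [← h₁₁, neg_sub]

end Blocks

section Lmat

variable {d : ℕ}

theorem Lmat_transpose_mul_Jmat_mul_Lmat :
    (Lmat (d := d))ᵀ * Jmat (Fin d) * Lmat = -Jmat (Fin d) := by
  simp [Lmat, Jmat, fromBlocks_transpose, fromBlocks_multiply, fromBlocks_neg]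

theorem det_Lmat : (Lmat (d := d)).det = (-1) ^ d := by
  have hL : Lmat (d := d) = Jmat (Fin d) * fromBlocks (-1) 0 0 1 := by
    simp [Lmat, Jmat, fromBlocks_multiply]
  rw [hL, det_mul, det_Jmat, det_fromBlocks_zero₂₁, det_neg, det_one, Fintype.card_fin]
  ring

theorem isSymplectic_Lmat_mul {H : Matrix (Fin d ⊕ Fin d) (Fin d ⊕ Fin d) ℝ}
    (h : Hᵀ * Jmat (Fin d) * H = -Jmat (Fin d)) : IsSymplectic (Lmat * H) := by
  rw [IsSymplectic, transpose_mul,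
    show Hᵀ * Lmatᵀ * Jmat (Fin d) * (Lmat * H) = Hᵀ * (Lmatᵀ * Jmat (Fin d) * Lmat) * H by
      noncomm_ring,
    Lmat_transpose_mul_Jmat_mul_Lmat, mul_neg, neg_mul, h, neg_neg]

theorem det_eq_neg_one_pow_mul_det {E ℰ : Matrix (Fin d ⊕ Fin d) (Fin d ⊕ Fin d) ℝ}
    (hℰ : IsUnit ℰ.det) (h : IsSymplectic (Lmat * ℰ⁻¹ * E)) : E.det = (-1) ^ d * ℰ.det := by
  have hdet := h.det_eq_one
  rw [det_mul, det_mul, det_Lmat, det_nonsing_inv, Ring.inverse_eq_inv] at hdet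
  field_simp [hℰ.ne_zero] at hdet
  rw [← hdet, ← mul_assoc, ← pow_add, Even.neg_one_pow ⟨d, rfl⟩, one_mul]

end Lmat

/-- if ℰ_𝒜 is invertible then (i) F_𝒜 = ℰ_𝒜^{−T} ℱ_𝒜ᵀ E_𝒜, (ii)
𝔊_𝒜 = L ℰ_𝒜⁻¹ E_𝒜 is symplectic, (iii) E_𝒜 is invertible with
det(E_𝒜) = (−1)^d det(ℰ_𝒜); in particular E_𝒜 is invertible iff ℰ_𝒜 is. -/
theorem stmt5 {d : ℕ}
    (A11 A12 A13 A14 A21 A22 A23 A24 A31 A32 A33 A34 A41 A42 A43 A44 :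
      Matrix (Fin d) (Fin d) ℝ)
    (h : IsSymplectic
      (quad A11 A12 A13 A14 A21 A22 A23 A24 A31 A32 A33 A34 A41 A42 A43 A44)) :
    (IsUnit (Matrix.fromBlocks A12 A14 A22 A24).det →
      Matrix.fromBlocks A31 A33 A41 A43 =
        ((Matrix.fromBlocks A12 A14 A22 A24)ᵀ)⁻¹ *
          (Matrix.fromBlocks A32 A34 A42 A44)ᵀ * Matrix.fromBlocks A11 A13 A21 A23 ∧
      IsSymplectic
        (Lmat * (Matrix.fromBlocks A12 A14 A22 A24)⁻¹ *
          Matrix.fromBlocks A11 A13 A21 A23) ∧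
      IsUnit (Matrix.fromBlocks A11 A13 A21 A23).det ∧
      (Matrix.fromBlocks A11 A13 A21 A23).det =
        (-1 : ℝ) ^ d * (Matrix.fromBlocks A12 A14 A22 A24).det) ∧
    (IsUnit (Matrix.fromBlocks A11 A13 A21 A23).det ↔
      IsUnit (Matrix.fromBlocks A12 A14 A22 A24).det) := by
  set E := fromBlocks A11 A13 A21 A23
  set ℰ := fromBlocks A12 A14 A22 A24
  set F := fromBlocks A31 A33 A41 A43
  set ℱ := fromBlocks A32 A34 A42 A44
  rw [quad_eq_submatrix, isSymplectic_submatrix_sumSumSumComm_iff] at h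
  have hdet_sq := det_mul_self_eq_det_mul_self (add_mul_Jmat_mul_transpose_eq_zero h)
  rw [transpose_mul_Jmat_mul_fromBlocks, fromBlocks_inj] at h
  obtain ⟨h₁₁, -, h₂₁, h₂₂⟩ := h
  refine ⟨fun hℰ => ?_, ?_⟩
  · have hF : F = ℰᵀ⁻¹ * ℱᵀ * E := by
      rw [mul_assoc, ← sub_eq_zero.1 h₂₁,
        nonsing_inv_mul_cancel_left _ _ (by rwa [det_transpose])]
    have hG : IsSymplectic (Lmat * ℰ⁻¹ * E) := by
      rw [mul_assoc]
      exact isSymplectic_Lmat_mul (transpose_mul_Jmat_mul_inv_mul_eq_neg hℰ hF h₁₁ h₂₂)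
    have hdetE := det_eq_neg_one_pow_mul_det hℰ hG
    refine ⟨hF, hG, ?_, hdetE⟩
    rw [hdetE]
    exact (isUnit_neg_one.pow d).mul hℰ
  · rw [isUnit_iff_ne_zero, isUnit_iff_ne_zero, ← mul_self_ne_zero, hdet_sq, mul_self_ne_zero]
end

section
/- Let 𝒜 ∈ Sp(2d,ℝ) with submatrices E_𝒜, ℰ_𝒜, and assume E_𝒜 is invertible. Let L = [[0, I_d], [I_d, 0]], G_𝒜 = L E_𝒜^{−1} ℰ_𝒜 with d×d blocks G_𝒜 = [[A, B], [C, D]], let Ḡ_𝒜 = [[A, −B], [−C, D]], δ_𝒜 := J Ḡ_𝒜, and Q = [[I_d, 0], [0, −I_d]]. Then δ_𝒜^{−1} E_𝒜^{−1} = −Q ℰ_𝒜^{−1}; equivalently, δ_𝒜 = −E_𝒜^{−1} ℰ_𝒜 Q. -/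
open Matrix

/-!
Writing `Ḡ` for the matrix with the off-diagonal blocks of `G` negated, one has the purely
algebraic identity `J Ḡ = -(L G Q)`. Since `L² = 1`, this turns `δ_𝒜 = J Ḡ_𝒜` into
`-(E_𝒜⁻¹ ℰ_𝒜 Q)`, and then `δ_𝒜⁻¹ E_𝒜⁻¹ = (E_𝒜 δ_𝒜)⁻¹ = (ℰ_𝒜 (-Q))⁻¹ = -Q ℰ_𝒜⁻¹` because
`(-Q)² = 1`; the reversal `(XY)⁻¹ = Y⁻¹X⁻¹` holds for all square matrices, as `⁻¹` is `0`
on singular ones.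
-/

lemma Lmat_mul_self {d : ℕ} : (Lmat : Matrix (Fin d ⊕ Fin d) (Fin d ⊕ Fin d) ℝ) * Lmat = 1 := by
  simp [Lmat, fromBlocks_multiply, ← fromBlocks_one]

lemma inv_neg_Qmat {d : ℕ} : (-Qmat : Matrix (Fin d ⊕ Fin d) (Fin d ⊕ Fin d) ℝ)⁻¹ = -Qmat :=
  inv_eq_left_inv <| by simp [Qmat, fromBlocks_multiply, ← fromBlocks_one]

lemma Jmat_mul_fromBlocks_neg_offDiag {d : ℕ} (M : Matrix (Fin d ⊕ Fin d) (Fin d ⊕ Fin d) ℝ) :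
    Jmat (Fin d) * fromBlocks M.toBlocks₁₁ (-M.toBlocks₁₂) (-M.toBlocks₂₁) M.toBlocks₂₂ =
      -(Lmat * M * Qmat) := by
  conv_rhs => rw [← fromBlocks_toBlocks M]
  simp [Jmat, Lmat, Qmat, fromBlocks_multiply, fromBlocks_neg]

lemma Jmat_mul_fromBlocks_neg_offDiag_Lmat_mul {d : ℕ}
    (E F : Matrix (Fin d ⊕ Fin d) (Fin d ⊕ Fin d) ℝ) :
    Jmat (Fin d) * fromBlocks (Lmat * E⁻¹ * F).toBlocks₁₁ (-(Lmat * E⁻¹ * F).toBlocks₁₂)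
        (-(Lmat * E⁻¹ * F).toBlocks₂₁) (Lmat * E⁻¹ * F).toBlocks₂₂ =
      -(E⁻¹ * F * Qmat) := by
  rw [Jmat_mul_fromBlocks_neg_offDiag, mul_assoc Lmat E⁻¹, ← mul_assoc Lmat Lmat, Lmat_mul_self,
    one_mul]

lemma inv_neg_inv_mul_mul_Qmat_mul_inv {d : ℕ} {E : Matrix (Fin d ⊕ Fin d) (Fin d ⊕ Fin d) ℝ}
    (hE : IsUnit E.det) (F : Matrix (Fin d ⊕ Fin d) (Fin d ⊕ Fin d) ℝ) :
    (-(E⁻¹ * F * Qmat))⁻¹ * E⁻¹ = -(Qmat * F⁻¹) := by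
  have hEδ : E * -(E⁻¹ * F * Qmat) = F * -Qmat := by
    rw [mul_neg, mul_assoc, mul_nonsing_inv_cancel_left E _ hE, mul_neg]
  rw [← Matrix.mul_inv_rev, hEδ, Matrix.mul_inv_rev, inv_neg_Qmat, neg_mul]

theorem stmt11_general {d : ℕ}
    (A11 A12 A13 A14 A21 A22 A23 A24 :
      Matrix (Fin d) (Fin d) ℝ)
    (hE : IsUnit (Matrix.fromBlocks A11 A13 A21 A23).det) :
    (Jmat (Fin d) *
        Matrix.fromBlocks
          ((Lmat * (Matrix.fromBlocks A11 A13 A21 A23)⁻¹ *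
              Matrix.fromBlocks A12 A14 A22 A24).toBlocks₁₁)
          (-(Lmat * (Matrix.fromBlocks A11 A13 A21 A23)⁻¹ *
              Matrix.fromBlocks A12 A14 A22 A24).toBlocks₁₂)
          (-(Lmat * (Matrix.fromBlocks A11 A13 A21 A23)⁻¹ *
              Matrix.fromBlocks A12 A14 A22 A24).toBlocks₂₁)
          ((Lmat * (Matrix.fromBlocks A11 A13 A21 A23)⁻¹ *
              Matrix.fromBlocks A12 A14 A22 A24).toBlocks₂₂))⁻¹ *
      (Matrix.fromBlocks A11 A13 A21 A23)⁻¹ =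
      -(Qmat * (Matrix.fromBlocks A12 A14 A22 A24)⁻¹) ∧
    Jmat (Fin d) *
        Matrix.fromBlocks
          ((Lmat * (Matrix.fromBlocks A11 A13 A21 A23)⁻¹ *
              Matrix.fromBlocks A12 A14 A22 A24).toBlocks₁₁)
          (-(Lmat * (Matrix.fromBlocks A11 A13 A21 A23)⁻¹ *
              Matrix.fromBlocks A12 A14 A22 A24).toBlocks₁₂)
          (-(Lmat * (Matrix.fromBlocks A11 A13 A21 A23)⁻¹ *
              Matrix.fromBlocks A12 A14 A22 A24).toBlocks₂₁)
          ((Lmat * (Matrix.fromBlocks A11 A13 A21 A23)⁻¹ *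
              Matrix.fromBlocks A12 A14 A22 A24).toBlocks₂₂) =
      -((Matrix.fromBlocks A11 A13 A21 A23)⁻¹ *
          Matrix.fromBlocks A12 A14 A22 A24 * Qmat) := by
  have hδ := Jmat_mul_fromBlocks_neg_offDiag_Lmat_mul
    (fromBlocks A11 A13 A21 A23) (fromBlocks A12 A14 A22 A24)
  refine ⟨?_, hδ⟩
  rw [hδ]
  exact inv_neg_inv_mul_mul_Qmat_mul_inv hE _

/-- for shift-invertible 𝒜, with G_𝒜 = L E_𝒜⁻¹ ℰ_𝒜,
Ḡ_𝒜 its "bar", and δ_𝒜 = J Ḡ_𝒜, one has δ_𝒜⁻¹ E_𝒜⁻¹ = −Q ℰ_𝒜⁻¹,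
equivalently δ_𝒜 = −E_𝒜⁻¹ ℰ_𝒜 Q. -/
theorem stmt11 {d : ℕ}
    (A11 A12 A13 A14 A21 A22 A23 A24 A31 A32 A33 A34 A41 A42 A43 A44 :
      Matrix (Fin d) (Fin d) ℝ)
    (h : IsSymplectic
      (quad A11 A12 A13 A14 A21 A22 A23 A24 A31 A32 A33 A34 A41 A42 A43 A44))
    (hE : IsUnit (Matrix.fromBlocks A11 A13 A21 A23).det) :
    (Jmat (Fin d) *
        Matrix.fromBlocks
          ((Lmat * (Matrix.fromBlocks A11 A13 A21 A23)⁻¹ *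
              Matrix.fromBlocks A12 A14 A22 A24).toBlocks₁₁)
          (-(Lmat * (Matrix.fromBlocks A11 A13 A21 A23)⁻¹ *
              Matrix.fromBlocks A12 A14 A22 A24).toBlocks₁₂)
          (-(Lmat * (Matrix.fromBlocks A11 A13 A21 A23)⁻¹ *
              Matrix.fromBlocks A12 A14 A22 A24).toBlocks₂₁)
          ((Lmat * (Matrix.fromBlocks A11 A13 A21 A23)⁻¹ *
              Matrix.fromBlocks A12 A14 A22 A24).toBlocks₂₂))⁻¹ *
      (Matrix.fromBlocks A11 A13 A21 A23)⁻¹ =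
      -(Qmat * (Matrix.fromBlocks A12 A14 A22 A24)⁻¹) ∧
    Jmat (Fin d) *
        Matrix.fromBlocks
          ((Lmat * (Matrix.fromBlocks A11 A13 A21 A23)⁻¹ *
              Matrix.fromBlocks A12 A14 A22 A24).toBlocks₁₁)
          (-(Lmat * (Matrix.fromBlocks A11 A13 A21 A23)⁻¹ *
              Matrix.fromBlocks A12 A14 A22 A24).toBlocks₁₂)
          (-(Lmat * (Matrix.fromBlocks A11 A13 A21 A23)⁻¹ *
              Matrix.fromBlocks A12 A14 A22 A24).toBlocks₂₁)
          ((Lmat * (Matrix.fromBlocks A11 A13 A21 A23)⁻¹ *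
              Matrix.fromBlocks A12 A14 A22 A24).toBlocks₂₂) =
      -((Matrix.fromBlocks A11 A13 A21 A23)⁻¹ *
          Matrix.fromBlocks A12 A14 A22 A24 * Qmat) :=
  stmt11_general A11 A12 A13 A14 A21 A22 A23 A24 hE
end

section
/- For every τ ∈ ℝ, the 4d×4d matrix A_τ with d×d blocks [[(1−τ)I, τI, 0, 0], [0, 0, τI, −(1−τ)I], [0, 0, I, I], [−I, I, 0, 0]] belongs to Sp(2d,ℝ). Likewise, the 4d×4d matrix A_{ST} with d×d blocks [[I, −I, 0, 0], [0, 0, I, I], [0, 0, 0, −I], [−I, 0, 0, 0]] belongs to Sp(2d,ℝ). -/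
/-!
Writing a 2n×2n matrix as `[[A, B], [C, D]]`, the condition `Sᵀ J S = J` amounts to
`AᵀC` and `BᵀD` being symmetric and `AᵀD - CᵀB = 1`. For both matrices of the statement
`AᵀC = BᵀD = 0`, and `AᵀD - CᵀB = 1` is an identity between 2×2 block matrices with
scalar blocks.
-/

open Matrix

theorem isSymplectic_fromBlocks_iff {n : Type*} [DecidableEq n] [Fintype n]
    {A B C D : Matrix n n ℝ} :
    IsSymplectic (fromBlocks A B C D) ↔
      Aᵀ * C = Cᵀ * A ∧ Bᵀ * D = Dᵀ * B ∧ Aᵀ * D - Cᵀ * B = 1 := by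
  have hJ : fromBlocks Aᵀ Cᵀ Bᵀ Dᵀ * Jmat n * fromBlocks A B C D =
      fromBlocks (Aᵀ * C - Cᵀ * A) (Aᵀ * D - Cᵀ * B) (Bᵀ * C - Dᵀ * A) (Bᵀ * D - Dᵀ * B) := by
    simp only [Jmat, fromBlocks_multiply]
    congr 1 <;> noncomm_ring
  rw [IsSymplectic, fromBlocks_transpose, hJ, Jmat, fromBlocks_inj, sub_eq_zero, sub_eq_zero]
  constructor
  · rintro ⟨hAC, hAD, -, hBD⟩
    exact ⟨hAC, hBD, hAD⟩
  · rintro ⟨hAC, hBD, hAD⟩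
    refine ⟨hAC, hAD, ?_, hBD⟩
    simpa [transpose_sub] using congrArg (fun M => -Mᵀ) hAD

/-- the matrices A_τ (for every τ ∈ ℝ) and A_{ST} belong to Sp(2d,ℝ). -/
theorem stmt19 {d : ℕ} :
    (∀ τ : ℝ,
      IsSymplectic
        (quad ((1 - τ) • (1 : Matrix (Fin d) (Fin d) ℝ)) (τ • 1) 0 0
          0 0 (τ • 1) (-(1 - τ) • 1)
          0 0 1 1
          (-1) 1 0 0)) ∧
    IsSymplectic
      (quad (1 : Matrix (Fin d) (Fin d) ℝ) (-1) 0 0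
        0 0 1 1
        0 0 0 (-1)
        (-1) 0 0 0) := by
  refine ⟨fun τ => ?_, ?_⟩ <;>
    simp only [quad, isSymplectic_fromBlocks_iff, fromBlocks_transpose, fromBlocks_multiply] <;>
    refine ⟨by simp, by simp, ?_⟩ <;>
    rw [sub_eq_add_neg, fromBlocks_neg, fromBlocks_add, ← fromBlocks_one]
  · congr 1 <;> simp <;> module
  · congr 1 <;> simp
end
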